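/- arXiv:2410.09626 — 4 statements merged into one kernel-verified Lean document; each statement's English description precedes it below -/
import Mathlib

section
/- Let U : [0,∞) → ℝ be differentiable with U(0) = 0, with U(t) → 8π as t → +∞, and satisfying the differential inequality U'(t) + U(t)²/(16π) ≤ 4π for all t ≥ 0. Then U(t) ≤ 8π(e^t − 1)/(e^t + 1) for every t ≥ 0. -/
/-!
`W(t) = 8π (eᵗ - 1)/(eᵗ + 1) = 8π tanh(t/2)` solves the Riccati equation `W' = 4π - W²/(16π)`
with `W(0) = 0`. The right-hand side is strictly decreasing on `[0, ∞)`, where `W` lives, so a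
subsolution `U` can never cross `W + ε`: at a first touching point `U' ≤ 4π - (W + ε)²/(16π) < W'`.
Letting `ε → 0` gives `U ≤ W`.
-/

open Set Real

theorem image_le_of_deriv_right_le_of_strictAntiOn {f f' B B' F : ℝ → ℝ} {a b m : ℝ}
    (hf : ContinuousOn f (Icc a b)) (hf' : ∀ x ∈ Ico a b, HasDerivWithinAt f (f' x) (Ici x) x)
    (ha : f a ≤ B a) (hB : ∀ x, HasDerivAt B (B' x) x) (hBm : ∀ x ∈ Ico a b, m ≤ B x)
    (hF : StrictAntiOn F (Ici m)) (hfF : ∀ x ∈ Ico a b, f' x ≤ F (f x))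
    (hBF : ∀ x ∈ Ico a b, B' x = F (B x)) :
    ∀ ⦃x⦄, x ∈ Icc a b → f x ≤ B x := by
  intro x hx
  refine le_of_forall_pos_le_add fun ε hε => ?_
  refine image_le_of_deriv_right_lt_deriv_boundary hf hf' (by linarith)
    (fun y => (hB y).add_const ε) (fun y hy hfy => ?_) hx
  have hBy : m ≤ B y := hBm y hy
  calc f' y ≤ F (B y + ε) := hfy ▸ hfF y hy
    _ < F (B y) := hF (mem_Ici.2 hBy) (mem_Ici.2 (by linarith)) (by linarith)
    _ = B' y := (hBF y hy).symm

theorem strictAntiOn_sub_sq_div {c k : ℝ} (hk : 0 < k) :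
    StrictAntiOn (fun y => c - y ^ 2 / k) (Ici 0) := fun x hx y _ hxy => by
  have : x ^ 2 < y ^ 2 := pow_lt_pow_left₀ hxy hx two_ne_zero
  simpa using div_lt_div_of_pos_right this hk

theorem hasDerivAt_mul_exp_sub_one_div_exp_add_one (A t : ℝ) (hA : A ≠ 0) :
    HasDerivAt (fun t => A * (exp t - 1) / (exp t + 1))
      (A / 2 - (A * (exp t - 1) / (exp t + 1)) ^ 2 / (2 * A)) t := by
  have hden : exp t + 1 ≠ 0 := by positivity
  refine ((((hasDerivAt_exp t).sub_const 1).const_mul A).div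
    ((hasDerivAt_exp t).add_const 1) hden).congr_deriv ?_
  field_simp
  ring

theorem mul_exp_sub_one_div_exp_add_one_nonneg {A t : ℝ} (hA : 0 ≤ A) (ht : 0 ≤ t) :
    0 ≤ A * (exp t - 1) / (exp t + 1) := by
  have : 0 ≤ exp t - 1 := sub_nonneg.2 (one_le_exp ht)
  positivity

theorem stmt_1_general (U U' : ℝ → ℝ)
    (hderiv : ∀ t ∈ Set.Ici (0 : ℝ), HasDerivWithinAt U (U' t) (Set.Ici 0) t)
    (h0 : U 0 = 0)
    (hineq : ∀ t ∈ Set.Ici (0 : ℝ), U' t + (U t) ^ 2 / (16 * Real.pi) ≤ 4 * Real.pi) :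
    ∀ t ∈ Set.Ici (0 : ℝ), U t ≤ 8 * Real.pi * (Real.exp t - 1) / (Real.exp t + 1) := by
  intro t ht
  have hA : (0 : ℝ) < 8 * π := by positivity
  have hU : ∀ x ∈ Ico 0 t, U' x ≤ 8 * π / 2 - U x ^ 2 / (2 * (8 * π)) := fun x hx => by
    have := hineq x hx.1
    rw [show 8 * π / 2 = 4 * π by ring, show 2 * (8 * π) = 16 * π by ring]
    linarith
  refine image_le_of_deriv_right_le_of_strictAntiOn
    (fun x hx => (hderiv x hx.1).continuousWithinAt.mono Icc_subset_Ici_self)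
    (fun x hx => (hderiv x hx.1).mono (Ici_subset_Ici.2 hx.1))
    (by simp [h0]) (fun x => hasDerivAt_mul_exp_sub_one_div_exp_add_one _ x hA.ne')
    (fun x hx => mul_exp_sub_one_div_exp_add_one_nonneg hA.le hx.1)
    (strictAntiOn_sub_sq_div (by positivity)) hU (fun _ _ => rfl) ⟨ht, le_rfl⟩

/-- ODE comparison: if `U` is differentiable on `[0,∞)` with `U(0) = 0`,
`U(t) → 8π` at infinity, and satisfies `U' + U²/(16π) ≤ 4π` on `[0,∞)`,
then `U(t) ≤ 8π(e^t − 1)/(e^t + 1)` for every `t ≥ 0`. -/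
theorem stmt_1 (U U' : ℝ → ℝ)
    (hderiv : ∀ t ∈ Set.Ici (0 : ℝ), HasDerivWithinAt U (U' t) (Set.Ici 0) t)
    (h0 : U 0 = 0)
    (hlim : Filter.Tendsto U Filter.atTop (nhds (8 * Real.pi)))
    (hineq : ∀ t ∈ Set.Ici (0 : ℝ), U' t + (U t) ^ 2 / (16 * Real.pi) ≤ 4 * Real.pi) :
    ∀ t ∈ Set.Ici (0 : ℝ), U t ≤ 8 * Real.pi * (Real.exp t - 1) / (Real.exp t + 1) :=
  stmt_1_general U U' hderiv h0 hineq
end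

section
/- Let U : [0,∞) → ℝ be differentiable with U(0) = 0, with U(t) → 8π as t → +∞, and satisfying U'(t) + U(t)²/(16π) ≤ 4π for all t ≥ 0. If M ∈ ℝ satisfies limsup_{t→∞} e^t(8π − U(t)) ≤ 8πM, then M ≥ 2. -/
/-!
Put `g(t) = eᵗ (8π - U(t))`. The differential inequality for `U` gives the Riccati-type
inequality `g' ≥ e⁻ᵗ g² / (16π)`, so `g` increases from `g(0) = 8π` and stays positive; then
`(1/g)' ≤ -e⁻ᵗ/(16π)` integrates to `1/g(t) ≤ (1 + e⁻ᵗ)/(16π)`. Hence `g(t) ≥ 16π/(1 + e⁻ᵗ) → 16π`,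
so the limsup of `g` is at least `16π`, and `16π ≤ 8πM`.
-/

open Set Filter Real Topology

theorem monotoneOn_Ici_of_hasDerivWithinAt_nonneg {f f' : ℝ → ℝ} {a : ℝ}
    (hf : ∀ x ∈ Ici a, HasDerivWithinAt f (f' x) (Ici a) x) (hf' : ∀ x ∈ Ioi a, 0 ≤ f' x) :
    MonotoneOn f (Ici a) := by
  refine monotoneOn_of_hasDerivWithinAt_nonneg (f' := f') (convex_Ici a)
    (fun x hx => (hf x hx).continuousWithinAt) (fun x hx => ?_) (fun x hx => ?_)
  · rw [interior_Ici] at hx ⊢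
    exact (hf x (mem_Ici_of_Ioi hx)).mono Ioi_subset_Ici_self
  · rw [interior_Ici] at hx
    exact hf' x hx

theorem one_le_mul_of_exp_neg_mul_sq_le_deriv {g g' : ℝ → ℝ} {k : ℝ}
    (hk : 0 ≤ k) (hg₀ : 0 < g 0) (hg : ∀ t ∈ Ici 0, HasDerivWithinAt g (g' t) (Ici 0) t)
    (hg' : ∀ t ∈ Ici 0, k * exp (-t) * g t ^ 2 ≤ g' t) {t : ℝ} (ht : 0 ≤ t) :
    1 ≤ g t * ((g 0)⁻¹ - k * (1 - exp (-t))) := by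
  have g_mono : MonotoneOn g (Ici 0) :=
    monotoneOn_Ici_of_hasDerivWithinAt_nonneg hg fun s hs =>
      (by positivity : 0 ≤ k * exp (-s) * g s ^ 2).trans (hg' s (mem_Ici_of_Ioi hs))
  have g_pos : ∀ s ∈ Ici (0 : ℝ), 0 < g s := fun s hs =>
    hg₀.trans_le (g_mono self_mem_Ici hs hs)
  set ψ : ℝ → ℝ := fun s => k * exp (-s) - (g s)⁻¹
  have hψ : ∀ s ∈ Ici (0 : ℝ),
      HasDerivWithinAt ψ (k * (exp (-s) * -1) - -g' s / g s ^ 2) (Ici 0) s := fun s hs =>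
    ((hasDerivWithinAt_neg s _).exp.const_mul k).sub ((hg s hs).inv (g_pos s hs).ne')
  have ψ_mono : MonotoneOn ψ (Ici 0) := by
    refine monotoneOn_Ici_of_hasDerivWithinAt_nonneg hψ fun s hs => ?_
    have hs' := mem_Ici_of_Ioi hs
    have hgs := g_pos s hs'
    have : k * exp (-s) ≤ g' s / g s ^ 2 := by
      rw [le_div_iff₀ (by positivity)]; exact hg' s hs'
    linarith [neg_div (g s ^ 2) (g' s)]
  have hψt : ψ 0 ≤ ψ t := ψ_mono self_mem_Ici ht ht
  have hgt := g_pos t ht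
  have inv_le : (g t)⁻¹ ≤ (g 0)⁻¹ - k * (1 - exp (-t)) := by
    simp only [ψ, neg_zero, exp_zero] at hψt; linarith
  calc (1 : ℝ) = g t * (g t)⁻¹ := (mul_inv_cancel₀ hgt.ne').symm
    _ ≤ _ := mul_le_mul_of_nonneg_left inv_le hgt.le

theorem EReal.coe_le_limsup_of_tendsto_of_eventuallyLE {α : Type*} {l : Filter α} [l.NeBot]
    {f g : α → ℝ} {a : ℝ} (hf : Tendsto f l (𝓝 a)) (hfg : f ≤ᶠ[l] g) :
    (a : EReal) ≤ limsup (fun x => (g x : EReal)) l := by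
  rw [← (EReal.tendsto_coe.mpr hf).limsup_eq]
  exact limsup_le_limsup (hfg.mono fun x hx => EReal.coe_le_coe_iff.mpr hx)

theorem stmt_4_general (U U' : ℝ → ℝ) (M : ℝ)
    (hderiv : ∀ t ∈ Set.Ici (0 : ℝ), HasDerivWithinAt U (U' t) (Set.Ici 0) t)
    (h0 : U 0 = 0)
    (hineq : ∀ t ∈ Set.Ici (0 : ℝ), U' t + (U t) ^ 2 / (16 * Real.pi) ≤ 4 * Real.pi)
    (hlimsup : Filter.limsup
      (fun t : ℝ => ((Real.exp t * (8 * Real.pi - U t) : ℝ) : EReal)) Filter.atTop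
        ≤ ((8 * Real.pi * M : ℝ) : EReal)) :
    2 ≤ M := by
  set g : ℝ → ℝ := fun t => exp t * (8 * π - U t)
  have hg : ∀ t ∈ Ici (0 : ℝ),
      HasDerivWithinAt g (exp t * (8 * π - U t - U' t)) (Ici 0) t := fun t ht =>
    ((hasDerivAt_exp t).hasDerivWithinAt.mul
      ((hderiv t ht).const_sub (8 * π))).congr_deriv (by ring)
  have riccati : ∀ t ∈ Ici (0 : ℝ),
      (16 * π)⁻¹ * exp (-t) * g t ^ 2 ≤ exp t * (8 * π - U t - U' t) := fun t ht => by
    have hsq : (16 * π)⁻¹ * exp (-t) * g t ^ 2 = exp t * ((8 * π - U t) ^ 2 / (16 * π)) := by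
      simp only [g, exp_neg]; field_simp
    have hexpand : (8 * π - U t) ^ 2 / (16 * π) = U t ^ 2 / (16 * π) + 4 * π - U t := by
      field_simp; ring
    rw [hsq]
    gcongr
    linarith [hineq t ht]
  have g_zero : g 0 = 8 * π := by simp [g, h0]
  have lower : ∀ᶠ t in atTop, 16 * π / (1 + exp (-t)) ≤ g t := by
    filter_upwards [eventually_ge_atTop 0] with t ht
    have key := one_le_mul_of_exp_neg_mul_sq_le_deriv (by positivity)
      (g_zero ▸ by positivity) hg riccati ht
    have hcoef : (g 0)⁻¹ - (16 * π)⁻¹ * (1 - exp (-t)) = (1 + exp (-t)) / (16 * π) := by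
      rw [g_zero]; field_simp; ring
    rw [hcoef, ← mul_div_assoc, one_le_div (by positivity)] at key
    rwa [div_le_iff₀ (by positivity)]
  have lower_tendsto : Tendsto (fun t => 16 * π / (1 + exp (-t))) atTop (𝓝 (16 * π)) := by
    simpa [Pi.div_def] using
      tendsto_const_nhds.div (tendsto_exp_neg_atTop_nhds_zero.const_add 1) (by norm_num)
  have h16 : 16 * π ≤ 8 * π * M := EReal.coe_le_coe_iff.mp <|
    (EReal.coe_le_limsup_of_tendsto_of_eventuallyLE lower_tendsto lower).trans hlimsup
  nlinarith [pi_pos]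

/-- Analytic skeleton of the mass–conformal capacity inequality `m_ADM ≥ 2𝔠(Ω)`:
if `U` is differentiable on `[0,∞)` with `U(0) = 0`, `U(t) → 8π` at infinity,
`U' + U²/(16π) ≤ 4π` on `[0,∞)`, and
`limsup_{t→∞} e^t(8π − U(t)) ≤ 8πM`, then `M ≥ 2`. -/
theorem stmt_4 (U U' : ℝ → ℝ) (M : ℝ)
    (hderiv : ∀ t ∈ Set.Ici (0 : ℝ), HasDerivWithinAt U (U' t) (Set.Ici 0) t)
    (h0 : U 0 = 0)
    (hlim : Filter.Tendsto U Filter.atTop (nhds (8 * Real.pi)))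
    (hineq : ∀ t ∈ Set.Ici (0 : ℝ), U' t + (U t) ^ 2 / (16 * Real.pi) ≤ 4 * Real.pi)
    (hlimsup : Filter.limsup
      (fun t : ℝ => ((Real.exp t * (8 * Real.pi - U t) : ℝ) : EReal)) Filter.atTop
        ≤ ((8 * Real.pi * M : ℝ) : EReal)) :
    2 ≤ M :=
  stmt_4_general U U' M hderiv h0 hineq hlimsup
end

section
/- Let U : [0,∞) → ℝ and define Q : [0,∞) → ℝ by Q(t) = 8π(e^t + 2 − e^{−t}) − (e^t + 1)² e^{−t} U(t). Suppose Q is monotone nondecreasing on [0,∞) and that Q(s) ≥ 16π + a for some s ≥ 0 and some a > 0. Then limsup_{t→∞} e^t(8π − U(t)) ≥ 16π + a. -/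
open Filter Real

/-- Quantitative excess: if the quantity
`Q(t) = 8π(e^t + 2 − e^{−t}) − (e^t + 1)² e^{−t} U(t)` is monotone
nondecreasing on `[0,∞)` and `Q(s) ≥ 16π + a` for some `s ≥ 0` and `a > 0`,
then `limsup_{t→∞} e^t(8π − U(t)) ≥ 16π + a` (limsup in the extended reals). -/
theorem stmt_6 (U : ℝ → ℝ) (Q : ℝ → ℝ)
    (hQ : ∀ t, Q t = 8 * Real.pi * (Real.exp t + 2 - Real.exp (-t))
      - (Real.exp t + 1) ^ 2 * Real.exp (-t) * U t)
    (hmono : MonotoneOn Q (Set.Ici 0))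
    (s a : ℝ) (hs : 0 ≤ s) (ha : 0 < a)
    (hQs : 16 * Real.pi + a ≤ Q s) :
    ((16 * Real.pi + a : ℝ) : EReal) ≤ Filter.limsup
      (fun t : ℝ => ((Real.exp t * (8 * Real.pi - U t) : ℝ) : EReal)) Filter.atTop := by
  set L : ℝ := 16 * Real.pi + a with hL
  -- the auxiliary lower bound function
  set g : ℝ → ℝ := fun t => (16 * Real.pi + Real.exp t * L) / (Real.exp t + 2 + Real.exp (-t))
    with hg
  have hcpos : ∀ t : ℝ, 0 < Real.exp t + 2 + Real.exp (-t) := fun t => by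
    positivity
  have hexp1 : ∀ t : ℝ, Real.exp t * Real.exp (-t) = 1 := fun t => by
    rw [← Real.exp_add]; simp
  -- key algebraic identity
  have key : ∀ t : ℝ, (Real.exp t * (8 * Real.pi - U t)) * (Real.exp t + 2 + Real.exp (-t))
      = 16 * Real.pi + Real.exp t * Q t := by
    intro t
    rw [hQ t]
    linear_combination (16 * Real.pi + U t * (Real.exp t ^ 2 + 2 * Real.exp t)) * hexp1 t
  -- g tends to L
  have hgR : Tendsto g atTop (nhds L) := by
    have hrw : ∀ t : ℝ, g t = (16 * Real.pi * Real.exp (-t) + L) /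
        (1 + 2 * Real.exp (-t) + Real.exp (-t) ^ 2) := by
      intro t
      have h2 : (0:ℝ) < 1 + 2 * Real.exp (-t) + Real.exp (-t) ^ 2 := by positivity
      rw [hg]
      rw [div_eq_div_iff (hcpos t).ne' h2.ne']
      linear_combination (2 * L + L * Real.exp (-t) - 16 * Real.pi) * hexp1 t
    have h0 : Tendsto (fun t : ℝ => Real.exp (-t)) atTop (nhds 0) := by
      simpa using Real.tendsto_exp_neg_atTop_nhds_zero
    have hnum : Tendsto (fun t : ℝ => 16 * Real.pi * Real.exp (-t) + L) atTop (nhds L) := by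
      have := (h0.const_mul (16 * Real.pi)).add_const L
      simpa using this
    have hden : Tendsto (fun t : ℝ => 1 + 2 * Real.exp (-t) + Real.exp (-t) ^ 2) atTop
        (nhds 1) := by
      have := ((h0.const_mul 2).const_add 1).add (h0.pow 2)
      simpa using this
    have := hnum.div hden (by norm_num)
    simp only [div_one] at this
    exact (Filter.tendsto_congr hrw).mpr this
  -- eventual pointwise bound
  have hev : ∀ᶠ t in atTop, g t ≤ Real.exp t * (8 * Real.pi - U t) := by
    filter_upwards [eventually_ge_atTop s] with t hts
    have hQt : L ≤ Q t := le_trans hQs (hmono hs (le_trans hs hts) hts)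
    have hft : Real.exp t * (8 * Real.pi - U t)
        = (16 * Real.pi + Real.exp t * Q t) / (Real.exp t + 2 + Real.exp (-t)) := by
      rw [eq_div_iff (hcpos t).ne']
      exact key t
    rw [hft, hg]
    have hnum : 16 * Real.pi + Real.exp t * L ≤ 16 * Real.pi + Real.exp t * Q t := by
      have := mul_le_mul_of_nonneg_left hQt (Real.exp_pos t).le
      linarith
    exact (div_le_div_iff_of_pos_right (hcpos t)).mpr hnum
  -- pass to EReal
  have hgE : Tendsto (fun t : ℝ => ((g t : ℝ) : EReal)) atTop (nhds ((L : ℝ) : EReal)) :=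
    (continuous_coe_real_ereal.tendsto _).comp hgR
  have hlim : Filter.limsup (fun t : ℝ => ((g t : ℝ) : EReal)) atTop = ((L : ℝ) : EReal) :=
    hgE.limsup_eq
  rw [← hlim]
  have h : (fun t : ℝ => ((g t : ℝ) : EReal)) ≤ᶠ[atTop]
      fun t : ℝ => ((Real.exp t * (8 * Real.pi - U t) : ℝ) : EReal) := by
    filter_upwards [hev] with t ht
    exact_mod_cast ht
  exact Filter.limsup_le_limsup h
end

section
/- Let E = EuclideanSpace ℝ (Fin 3) and let g : E → E be continuously differentiable on a neighborhood of a point x with g(x) ≠ 0. Suppose the divergence of the vector field y ↦ ‖g(y)‖ • g(y) vanishes at x. Then the divergence at x of the normalized field y ↦ ‖g(y)‖^{−1} • g(y) equals −2 D(x)(g(x)) / ‖g(x)‖², where D(x) denotes the (Fréchet) derivative at x of the function y ↦ ‖g(y)‖. -/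
/-!
The product rule `div (c • g) = c * div g + Dc (g)`, applied to both `c` and `c⁻¹`
(with `D(c⁻¹) = -Dc / c²`), eliminates `div g` and gives
`div (c⁻¹ • g) = (div (c • g) - 2 Dc (g)) / c²`; now take `c = ‖g‖`.
-/

/-- The divergence of a vector field `F : ℝ³ → ℝ³` at a point `x`, computed as
`∑ᵢ ⟨(fderiv ℝ F x)(eᵢ), eᵢ⟩` in the standard orthonormal basis. -/
noncomputable def divergence3
    (F : EuclideanSpace ℝ (Fin 3) → EuclideanSpace ℝ (Fin 3))
    (x : EuclideanSpace ℝ (Fin 3)) : ℝ :=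
  ∑ i : Fin 3,
    (inner ℝ ((fderiv ℝ F x) (EuclideanSpace.single i (1 : ℝ)))
      (EuclideanSpace.single i (1 : ℝ)) : ℝ)

theorem EuclideanSpace.sum_apply_single_mul {ι : Type*} [Fintype ι] [DecidableEq ι]
    (L : EuclideanSpace ℝ ι →L[ℝ] ℝ) (v : EuclideanSpace ℝ ι) :
    ∑ i, L (EuclideanSpace.single i 1) * v i = L v := by
  conv_rhs => rw [← (EuclideanSpace.basisFun ι ℝ).sum_repr v]
  simp [map_sum, mul_comm]

theorem fderiv_fun_inv_apply {E : Type*} [NormedAddCommGroup E] [NormedSpace ℝ E]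
    {c : E → ℝ} {x : E} (hc : DifferentiableAt ℝ c x) (hcx : c x ≠ 0) (v : E) :
    fderiv ℝ (fun y => (c y)⁻¹) x v = -fderiv ℝ c x v / c x ^ 2 := by
  rw [fderiv_fun_comp x (differentiableAt_inv hcx) hc, fderiv_inv]
  simp [div_eq_mul_inv, mul_comm]

section

variable {g : EuclideanSpace ℝ (Fin 3) → EuclideanSpace ℝ (Fin 3)}
  {c : EuclideanSpace ℝ (Fin 3) → ℝ} {x : EuclideanSpace ℝ (Fin 3)}

theorem divergence3_smul (hc : DifferentiableAt ℝ c x) (hg : DifferentiableAt ℝ g x) :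
    divergence3 (fun y => c y • g y) x = c x * divergence3 g x + fderiv ℝ c x (g x) := by
  simp only [divergence3, fderiv_fun_smul hc hg, Finset.mul_sum,
    ← EuclideanSpace.sum_apply_single_mul (fderiv ℝ c x) (g x), ← Finset.sum_add_distrib]
  refine Finset.sum_congr rfl fun i _ => ?_
  simp [inner_add_left, EuclideanSpace.inner_single_right, mul_comm]

theorem divergence3_inv_smul (hc : DifferentiableAt ℝ c x) (hcx : c x ≠ 0)
    (hg : DifferentiableAt ℝ g x) :
    divergence3 (fun y => (c y)⁻¹ • g y) x =
      (divergence3 (fun y => c y • g y) x - 2 * fderiv ℝ c x (g x)) / c x ^ 2 := by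
  rw [divergence3_smul (hc.fun_inv hcx) hg, divergence3_smul hc hg, fderiv_fun_inv_apply hc hcx]
  field_simp
  ring

end

/-- If `g : ℝ³ → ℝ³` is `C¹` near `x`, `g(x) ≠ 0`, and `div(‖g‖ • g)` vanishes
at `x`, then `div(‖g‖⁻¹ • g)(x) = −2 D(x)(g(x))/‖g(x)‖²`, where `D(x)` is the
Fréchet derivative of `y ↦ ‖g(y)‖` at `x`.  (With `g = ∇u` for a `3`-harmonic
`u`, this is the mean curvature identity `H = −2⟨∇|∇u|, ∇u⟩/|∇u|²`.) -/
theorem stmt_8 (g : EuclideanSpace ℝ (Fin 3) → EuclideanSpace ℝ (Fin 3))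
    (x : EuclideanSpace ℝ (Fin 3))
    (hg : ContDiffAt ℝ 1 g x) (hgx : g x ≠ 0)
    (hdiv : divergence3 (fun y => ‖g y‖ • g y) x = 0) :
    divergence3 (fun y => ‖g y‖⁻¹ • g y) x =
      -2 * (fderiv ℝ (fun y => ‖g y‖) x (g x)) / ‖g x‖ ^ 2 := by
  have hgd : DifferentiableAt ℝ g x := hg.differentiableAt one_ne_zero
  rw [divergence3_inv_smul (hgd.norm ℝ hgx) (norm_ne_zero_iff.mpr hgx) hgd, hdiv]
  ring
end
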